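/- Duality of reachability and observability: for a rectangular constrained switching system with edge matrices (A_σ, B_σ, C_σ, D_σ), the orthogonal complement of the reachability subspace satisfies B_v^⊥ = ⋂_{π ends at v} ker(B_πᵀ), and B_πᵀ equals the observability matrix C'_{π'} of the reversed path π' in the dual system defined on the reversed graph with matrices (A_σᵀ, C_σᵀ, B_σᵀ, D_σᵀ). Consequently B_v^⊥ is the unobservable subspace at v of the dual system. -/
import Mathlib


open Matrix

/-- Input-driven state of a rectangular switching system, from zero initial state. -/
def rstate {V Λ : Type*} (nd : V → ℕ) {d : ℕ} (src tgt : Λ → V)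
    (A : (σ : Λ) → Matrix (Fin (nd (tgt σ))) (Fin (nd (src σ))) ℝ)
    (B : (σ : Λ) → Matrix (Fin (nd (tgt σ))) (Fin d) ℝ)
    (σseq : ℕ → Λ) (hch : ∀ t, tgt (σseq t) = src (σseq (t + 1)))
    (w : ℕ → Fin d → ℝ) : (t : ℕ) → Fin (nd (src (σseq t))) → ℝ
  | 0 => 0
  | t + 1 => cast (congrArg (fun u => Fin (nd u) → ℝ) (hch t))
      ((A (σseq t)).mulVec (rstate nd src tgt A B σseq hch w t)
        + (B (σseq t)).mulVec (w t))

/-- The set of states reachable from `0` at node `v` along admissible paths. -/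
def reachSet {V Λ : Type*} (nd : V → ℕ) {d : ℕ} (src tgt : Λ → V) (Efin : Finset Λ)
    (A : (σ : Λ) → Matrix (Fin (nd (tgt σ))) (Fin (nd (src σ))) ℝ)
    (B : (σ : Λ) → Matrix (Fin (nd (tgt σ))) (Fin d) ℝ)
    (v : V) : Set (Fin (nd v) → ℝ) :=
  {x | ∃ (T : ℕ) (σseq : ℕ → Λ) (hch : ∀ t, tgt (σseq t) = src (σseq (t + 1)))
      (w : ℕ → Fin d → ℝ) (hT : src (σseq T) = v),
      (∀ t < T, σseq t ∈ Efin) ∧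
      x = cast (congrArg (fun u => Fin (nd u) → ℝ) hT)
            (rstate nd src tgt A B σseq hch w T)}

/-- Backward (dual) state propagation along a reversed path `τ` in the dual
system: the dual state evolves by the transposed `A`-matrices. -/
def dstate {V Λ : Type*} (nd : V → ℕ) (src tgt : Λ → V)
    (A : (σ : Λ) → Matrix (Fin (nd (tgt σ))) (Fin (nd (src σ))) ℝ)
    (τ : ℕ → Λ) (hch : ∀ t, tgt (τ (t + 1)) = src (τ t))
    (x : Fin (nd (tgt (τ 0))) → ℝ) : (t : ℕ) → Fin (nd (tgt (τ t))) → ℝ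
  | 0 => x
  | t + 1 => cast (congrArg (fun u => Fin (nd u) → ℝ) (hch t).symm)
      ((A (τ t))ᵀ.mulVec (dstate nd src tgt A τ hch x t))

section Helpers
variable {V Λ : Type*} (nd : V → ℕ) {d : ℕ} (src tgt : Λ → V)
  (A : (σ : Λ) → Matrix (Fin (nd (tgt σ))) (Fin (nd (src σ))) ℝ)
  (B : (σ : Λ) → Matrix (Fin (nd (tgt σ))) (Fin d) ℝ)

def dc {u u' : V} (h : u = u') (x : Fin (nd u) → ℝ) : Fin (nd u') → ℝ :=
  cast (congrArg (fun u => Fin (nd u) → ℝ) h) x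

lemma dc_dc {u u' u'' : V} (h1 : u = u') (h2 : u' = u'') (x : Fin (nd u) → ℝ) :
    dc nd h2 (dc nd h1 x) = dc nd (h1.trans h2) x := by subst h1; subst h2; rfl

lemma ip_dc {u u' : V} (h : u = u') (x y : Fin (nd u) → ℝ) :
    dc nd h x ⬝ᵥ dc nd h y = x ⬝ᵥ y := by subst h; rfl

lemma ip_dc' {u u' : V} (h : u = u') (x : Fin (nd u') → ℝ) (y : Fin (nd u) → ℝ) :
    x ⬝ᵥ dc nd h y = dc nd h.symm x ⬝ᵥ y := by subst h; rfl

lemma Bdc {e e' : Λ} (h : e = e') (x : Fin (nd (tgt e)) → ℝ) (wv : Fin d → ℝ) :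
    ((B e')ᵀ *ᵥ dc nd (congrArg tgt h) x) ⬝ᵥ wv = ((B e)ᵀ *ᵥ x) ⬝ᵥ wv := by
  subst h; rfl

lemma Adc {e e' : Λ} (h : e = e') (x : Fin (nd (tgt e)) → ℝ) :
    (A e')ᵀ *ᵥ dc nd (congrArg tgt h) x = dc nd (congrArg src h) ((A e)ᵀ *ᵥ x) := by
  subst h; rfl

lemma dstate_shift (τ : ℕ → Λ) (hch : ∀ t, tgt (τ (t + 1)) = src (τ t))
    (x : Fin (nd (tgt (τ 0))) → ℝ) (t : ℕ) :
    dstate nd src tgt A τ hch x (t + 1)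
      = dstate nd src tgt A (fun s => τ (s + 1)) (fun s => hch (s + 1))
          (dstate nd src tgt A τ hch x 1) t := by
  induction t with
  | zero => rfl
  | succ t ih => show cast _ _ = cast _ _; rw [ih]

lemma key : ∀ (T : ℕ) (σs : ℕ → Λ) (hchσ : ∀ t, tgt (σs t) = src (σs (t + 1)))
    (τ : ℕ → Λ) (hchτ : ∀ t, tgt (τ (t + 1)) = src (τ t))
    (w : ℕ → Fin d → ℝ)
    (x : Fin (nd (tgt (τ 0))) → ℝ) (h0 : tgt (τ 0) = src (σs T)),
    (∀ s < T, τ s = σs (T - 1 - s)) →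
    dc nd h0 x ⬝ᵥ rstate nd src tgt A B σs hchσ w T
      = ∑ t ∈ Finset.range T,
          ((B (τ (T - 1 - t)))ᵀ *ᵥ dstate nd src tgt A τ hchτ x (T - 1 - t)) ⬝ᵥ w t := by
  intro T
  induction T with
  | zero =>
    intro σs hchσ τ hchτ w x h0 hτσ
    show _ ⬝ᵥ (0 : Fin (nd (src (σs 0))) → ℝ) = 0
    simp
  | succ T ih =>
    intro σs hchσ τ hchτ w x h0 hτσ
    have h00 : τ 0 = σs T := by simpa using hτσ 0 (Nat.succ_pos T)
    have h' : tgt (τ 0) = tgt (σs T) := congrArg tgt h00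
    have hR : dc nd h0 x ⬝ᵥ rstate nd src tgt A B σs hchσ w (T + 1)
        = dc nd h' x ⬝ᵥ ((A (σs T)) *ᵥ rstate nd src tgt A B σs hchσ w T
            + (B (σs T)) *ᵥ w T) := by
      rw [show dc nd h0 x = dc nd (hchσ T) (dc nd h' x) from (dc_dc nd h' (hchσ T) x).symm]
      exact ip_dc nd (hchσ T) _ _
    rw [hR]
    rw [dotProduct_add, dotProduct_mulVec, dotProduct_mulVec, ← mulVec_transpose,
      ← mulVec_transpose]
    have hBterm : ((B (σs T))ᵀ *ᵥ dc nd h' x) ⬝ᵥ w T = ((B (τ 0))ᵀ *ᵥ x) ⬝ᵥ w T :=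
      Bdc nd tgt B h00 x (w T)
    have h0' : tgt ((fun s => τ (s + 1)) 0) = src (σs T) :=
      (hchτ 0).trans (congrArg src h00)
    have hAvec : (A (σs T))ᵀ *ᵥ dc nd h' x
        = dc nd h0' (dstate nd src tgt A τ hchτ x 1) := by
      rw [Adc nd src tgt A h00 x]
      show _ = dc nd h0' (dc nd (hchτ 0).symm ((A (τ 0))ᵀ *ᵥ x))
      rw [dc_dc]
    rw [hBterm, hAvec]
    rw [ih σs hchσ (fun s => τ (s + 1)) (fun s => hchτ (s + 1)) w
      (dstate nd src tgt A τ hchτ x 1) h0'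
      (by
        intro s hs
        have h2 := hτσ (s + 1) (by omega)
        show τ (s + 1) = σs (T - 1 - s)
        rw [h2]
        congr 1
        omega)]
    rw [Finset.sum_range_succ]
    congr 1
    · apply Finset.sum_congr rfl
      intro t ht
      rw [← dstate_shift]
      have harith : T - 1 - t + 1 = T + 1 - 1 - t := by
        simp only [Finset.mem_range] at ht; omega
      rw [harith]
    · have : T + 1 - 1 - T = 0 := by omega
      rw [this]
      rfl

def fchain (g : V → Λ) (u : V) : ℕ → Λ
  | 0 => g u
  | n + 1 => g (tgt (fchain g u n))

def bchain (g : V → Λ) (u : V) : ℕ → Λ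
  | 0 => g u
  | n + 1 => g (src (bchain g u n))

lemma extend_fwd (f : V → Λ) (hfs : ∀ u, src (f u) = u)
    (τ : ℕ → Λ) (hchτ : ∀ t, tgt (τ (t + 1)) = src (τ t)) (t : ℕ) :
    ∃ σs : ℕ → Λ, ∃ _ : ∀ s, tgt (σs s) = src (σs (s + 1)),
      (∀ s ≤ t, σs s = τ (t - s)) ∧ src (σs (t + 1)) = tgt (τ 0) := by
  refine ⟨fun s => if s ≤ t then τ (t - s) else fchain tgt f (tgt (τ 0)) (s - t - 1),
    ?_, ?_, ?_⟩
  · intro s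
    rcases lt_trichotomy s t with hs | hs | hs
    · simp only [if_pos hs.le, if_pos (by omega : s + 1 ≤ t)]
      rw [show t - s = t - (s + 1) + 1 by omega]
      exact hchτ _
    · subst hs
      simp only [if_pos le_rfl, if_neg (by omega : ¬ s + 1 ≤ s), Nat.sub_self]
      rw [show s + 1 - s - 1 = 0 by omega]
      exact (hfs (tgt (τ 0))).symm
    · simp only [if_neg (by omega : ¬ s ≤ t), if_neg (by omega : ¬ s + 1 ≤ t)]
      rw [show s + 1 - t - 1 = (s - t - 1) + 1 by omega]
      exact (hfs _).symm
  · intro s hs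
    simp only [if_pos hs]
  · simp only [if_neg (by omega : ¬ t + 1 ≤ t)]
    rw [show t + 1 - t - 1 = 0 by omega]
    exact hfs (tgt (τ 0))

lemma extend_bwd (g : V → Λ) (hg : ∀ u, tgt (g u) = u)
    (σs : ℕ → Λ) (hchσ : ∀ s, tgt (σs s) = src (σs (s + 1))) (T : ℕ) :
    ∃ τs : ℕ → Λ, ∃ _ : ∀ s, tgt (τs (s + 1)) = src (τs s),
      ∀ s < T, τs s = σs (T - 1 - s) := by
  refine ⟨fun s => if s < T then σs (T - 1 - s) else bchain src g (src (σs 0)) (s - T),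
    ?_, ?_⟩
  · intro s
    by_cases h1 : s + 1 < T
    · simp only [if_pos h1, if_pos (by omega : s < T)]
      rw [show T - 1 - s = T - 1 - (s + 1) + 1 by omega]
      exact hchσ _
    · by_cases h2 : s + 1 = T
      · simp only [if_neg (by omega : ¬ s + 1 < T), if_pos (by omega : s < T)]
        rw [show s + 1 - T = 0 by omega, show T - 1 - s = 0 by omega]
        exact hg (src (σs 0))
      · simp only [if_neg (by omega : ¬ s + 1 < T), if_neg (by omega : ¬ s < T)]
        rw [show s + 1 - T = (s - T) + 1 by omega]
        exact hg _
  · intro s hs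
    simp only [if_pos hs]

end Helpers

/-- duality of reachability and observability.  A vector `x` is
orthogonal to the reachability subspace `B_v` if and only if it is orthogonal to
the terminal state of every admissible path ending at `v` (i.e. `B_πᵀ x = 0` for
every such path `π`), if and only if `x` is unobservable at `v` for the dual
system (reversed edges, matrices `(Aᵀ, Cᵀ, Bᵀ, Dᵀ)`). -/
theorem stmt11 {V Λ : Type*} (nd : V → ℕ) {d : ℕ} (src tgt : Λ → V) (Efin : Finset Λ)
    (A : (σ : Λ) → Matrix (Fin (nd (tgt σ))) (Fin (nd (src σ))) ℝ)
    (B : (σ : Λ) → Matrix (Fin (nd (tgt σ))) (Fin d) ℝ)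
    (hnext : ∀ v : V, ∃ σ ∈ Efin, src σ = v)
    (hprev : ∀ v : V, ∃ σ ∈ Efin, tgt σ = v)
    (v : V) (x : Fin (nd v) → ℝ) :
    ((∀ y ∈ Submodule.span ℝ (reachSet nd src tgt Efin A B v), ∑ i, x i * y i = 0) ↔
      (∀ y ∈ reachSet nd src tgt Efin A B v, ∑ i, x i * y i = 0))
    ∧
    ((∀ y ∈ Submodule.span ℝ (reachSet nd src tgt Efin A B v), ∑ i, x i * y i = 0) ↔
      (∀ (T : ℕ) (τ : ℕ → Λ) (hch : ∀ t, tgt (τ (t + 1)) = src (τ t))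
        (h0 : tgt (τ 0) = v), (∀ t < T, τ t ∈ Efin) →
        ∀ t < T, (B (τ t))ᵀ.mulVec
          (dstate nd src tgt A τ hch
            (cast (congrArg (fun u => Fin (nd u) → ℝ) h0.symm) x) t) = 0)) := by
  classical
  choose f hfE hfs using hnext
  choose g hgE hgs using hprev
  have part1 : (∀ y ∈ Submodule.span ℝ (reachSet nd src tgt Efin A B v),
      ∑ i, x i * y i = 0) ↔
      (∀ y ∈ reachSet nd src tgt Efin A B v, ∑ i, x i * y i = 0) := by
    constructor
    · exact fun h y hy => h y (Submodule.subset_span hy)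
    · intro h y hy
      induction hy using Submodule.span_induction with
      | mem a ha => exact h a ha
      | zero => simp
      | add a b _ _ ha hb =>
        have ha' : x ⬝ᵥ a = 0 := ha
        have hb' : x ⬝ᵥ b = 0 := hb
        show x ⬝ᵥ (a + b) = 0
        rw [dotProduct_add, ha', hb', add_zero]
      | smul c a _ ha =>
        have ha' : x ⬝ᵥ a = 0 := ha
        show x ⬝ᵥ (c • a) = 0
        rw [dotProduct_smul, ha', smul_zero]
  refine ⟨part1, part1.trans ?_⟩
  constructor
  · intro h T τ hchτ h0 hE t ht
    obtain ⟨σs, hchσ, hστ, hend⟩ := extend_fwd src tgt f hfs τ hchτ t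
    set xv : Fin (nd (tgt (τ 0))) → ℝ :=
      cast (congrArg (fun u => Fin (nd u) → ℝ) h0.symm) x with hxv
    set z := (B (τ t))ᵀ *ᵥ dstate nd src tgt A τ hchτ xv t with hz
    set w : ℕ → Fin d → ℝ := fun s => if s = 0 then z else 0 with hw
    have hTv : src (σs (t + 1)) = v := hend.trans h0
    have hy : dc nd hTv (rstate nd src tgt A B σs hchσ w (t + 1))
        ∈ reachSet nd src tgt Efin A B v :=
      ⟨t + 1, σs, hchσ, w, hTv,
        fun s hs => by rw [hστ s (by omega)]; exact hE (t - s) (by omega), rfl⟩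
    have h1 : x ⬝ᵥ dc nd hTv (rstate nd src tgt A B σs hchσ w (t + 1)) = 0 := h _ hy
    rw [ip_dc'] at h1
    have hxx : dc nd hTv.symm x = dc nd (h0.trans hTv.symm) xv := by
      rw [hxv]
      show _ = dc nd (h0.trans hTv.symm) (dc nd h0.symm x)
      rw [dc_dc]
    rw [hxx] at h1
    rw [key nd src tgt A B (t + 1) σs hchσ τ hchτ w xv (h0.trans hTv.symm)
      (by
        intro s hs
        have e : t + 1 - 1 - s = t - s := by omega
        rw [e, hστ (t - s) (by omega)]
        congr 1
        omega)] at h1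
    rw [Finset.sum_eq_single 0 (fun b _ hb => by
        simp only [hw, if_neg hb, dotProduct_zero]) (by simp)] at h1
    rw [show t + 1 - 1 - 0 = t by omega] at h1
    simp only [hw, if_pos rfl] at h1
    rw [← hz] at h1
    exact dotProduct_self_eq_zero.mp h1
  · intro hdual y hy
    obtain ⟨T, σs, hchσ, w, hT, hmem, rfl⟩ := hy
    show x ⬝ᵥ dc nd hT (rstate nd src tgt A B σs hchσ w T) = 0
    rw [ip_dc']
    rcases Nat.eq_zero_or_pos T with hT0 | hTpos
    · subst hT0
      exact dotProduct_zero _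
    · obtain ⟨τs, hchτ, hτσ⟩ := extend_bwd src tgt g hgs σs hchσ T
      have h0v : tgt (τs 0) = v := by
        rw [hτσ 0 hTpos]
        have h2 := hchσ (T - 1)
        rw [show T - 1 - 0 = T - 1 by omega, h2, show T - 1 + 1 = T by omega]
        exact hT
      have hzero : ∀ s < T, (B (τs s))ᵀ *ᵥ
          (dstate nd src tgt A τs hchτ (dc nd h0v.symm x) s) = 0 :=
        hdual T τs hchτ h0v (fun s hs => by rw [hτσ s hs]; exact hmem (T - 1 - s) (by omega))
      have hxx : dc nd hT.symm x = dc nd (h0v.trans hT.symm) (dc nd h0v.symm x) := by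
        rw [dc_dc]
      rw [hxx, key nd src tgt A B T σs hchσ τs hchτ w (dc nd h0v.symm x)
        (h0v.trans hT.symm) hτσ]
      apply Finset.sum_eq_zero
      intro s hs
      rw [hzero (T - 1 - s) (by simp only [Finset.mem_range] at hs; omega), zero_dotProduct]
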